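/- Let k ≥ 1 and define s_γ := s_1^{2k} s_2, t_γ := t_1^{2k} t_2, w_{k,1} := ∑_{|δ|=k} s_δ s_γ s_δ^*, w_{k,2} := ∑_{|λ|=k} t_λ t_γ t_λ^*, and w_k := w_{k,2} w_{k,1}. Then w_k^* w_k = 1, and for all words μ_1, μ_2 in {1,…,n} and ν_1, ν_2 in {1,…,m} with |μ_1|, |μ_2|, |ν_1|, |ν_2| ≤ k one has: w_k^*·s_{μ_1}s_{μ_2}^* t_{ν_1}t_{ν_2}^*·w_k = s_{μ_1}s_{μ_2}^* t_{ν_1}t_{ν_2}^* if |μ_1| = |μ_2| and |ν_1| = |ν_2|, and w_k^*·s_{μ_1}s_{μ_2}^* t_{ν_1}t_{ν_2}^*·w_k = 0 otherwise. -/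
import Mathlib


open scoped BigOperators

noncomputable section

variable {A : Type*} [NormedRing A] [StarRing A] [CStarRing A]
  [NormedAlgebra ℂ A] [StarModule ℂ A] [CompleteSpace A]

/-- The product `s_{μ₁} ⋯ s_{μ_k}` associated to a word `μ : List (Fin n)`. -/
def wProd {n : ℕ} (s : Fin n → A) (μ : List (Fin n)) : A :=
  (μ.map s).prod

/-- The product associated to a word `μ : Fin k → Fin n`. -/
def sProd {n : ℕ} (s : Fin n → A) {k : ℕ} (μ : Fin k → Fin n) : A :=
  (List.ofFn fun i => s (μ i)).prod

set_option linter.unusedSectionVars false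
set_option maxHeartbeats 1000000

namespace Stmt17Aux

variable {p : ℕ}

@[simp] lemma wProd_nil (u : Fin p → A) : wProd u ([] : List (Fin p)) = 1 := rfl

@[simp] lemma wProd_cons (u : Fin p → A) (a : Fin p) (μ : List (Fin p)) :
    wProd u (a :: μ) = u a * wProd u μ := by simp [wProd]

lemma wProd_append (u : Fin p → A) (α β : List (Fin p)) :
    wProd u (α ++ β) = wProd u α * wProd u β := by simp [wProd]

lemma sProd_eq (u : Fin p → A) {k : ℕ} (δ : Fin k → Fin p) :
    sProd u δ = wProd u (List.ofFn δ) := by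
  simp [sProd, wProd, List.map_ofFn, Function.comp_def]

lemma wProd_replicate (u : Fin p → A) (i : Fin p) (c : ℕ) :
    wProd u (List.replicate c i) = u i ^ c := by
  induction c with
  | zero => simp
  | succ c ih => rw [List.replicate_succ, wProd_cons, ih, pow_succ']

lemma sProd_cons (u : Fin p → A) {k : ℕ} (i : Fin p) (δ : Fin k → Fin p) :
    sProd u (Fin.cons i δ) = u i * sProd u δ := by
  simp [sProd, List.ofFn_succ]

lemma cancel_le (u : Fin p → A) (hu : ∀ i j, star (u i) * u j = if i = j then 1 else 0)
    (α : List (Fin p)) : ∀ β : List (Fin p), α.length ≤ β.length →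
    star (wProd u α) * wProd u β =
      if α = β.take α.length then wProd u (β.drop α.length) else 0 := by
  induction α with
  | nil => intro β _; simp
  | cons a α ih =>
    intro β hβ
    match β with
    | [] => simp at hβ
    | b :: β' =>
      have hlen : α.length ≤ β'.length := by simpa using hβ
      rw [wProd_cons, wProd_cons, star_mul]
      have h1 : star (wProd u α) * star (u a) * (u b * wProd u β')
          = star (wProd u α) * ((star (u a) * u b) * wProd u β') := by
        simp only [mul_assoc]
      rw [h1, hu]
      by_cases hab : a = b
      · subst hab
        simp only [eq_self_iff_true, if_true, one_mul]
        rw [ih β' hlen]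
        simp [List.take, List.drop]
      · rw [if_neg hab]
        simp only [zero_mul, mul_zero]
        rw [if_neg]
        intro h
        simp only [List.length_cons, List.take_succ_cons, List.cons.injEq] at h
        exact hab h.1

lemma wProd_isometry (u : Fin p → A) (hu : ∀ i j, star (u i) * u j = if i = j then 1 else 0)
    (α : List (Fin p)) : star (wProd u α) * wProd u α = 1 := by
  rw [cancel_le u hu α α le_rfl]
  simp

lemma cancel_ge (u : Fin p → A) (hu : ∀ i j, star (u i) * u j = if i = j then 1 else 0)
    (α β : List (Fin p)) (h : β.length ≤ α.length) :
    star (wProd u α) * wProd u β =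
      if β = α.take β.length then star (wProd u (α.drop β.length)) else 0 := by
  have := congrArg star (cancel_le u hu β α h)
  rw [star_mul, star_star] at this
  rw [this]
  split_ifs <;> simp

end Stmt17Aux

namespace Stmt17Aux
variable {p : ℕ}

def Wop (u : Fin p → A) (g : A) (j : ℕ) : A :=
  ∑ δ : Fin j → Fin p, sProd u δ * g * star (sProd u δ)

lemma Wop_zero (u : Fin p → A) (g : A) : Wop u g 0 = g := by
  rw [Wop, Fintype.sum_unique]
  simp [sProd]

lemma Wop_succ (u : Fin p → A) (g : A) (j : ℕ) :
    Wop u g (j+1) = ∑ i : Fin p, u i * Wop u g j * star (u i) := by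
  rw [Wop]
  rw [← (Fin.consEquiv (fun _ : Fin (j+1) => Fin p)).sum_comp
      (fun δ => sProd u δ * g * star (sProd u δ))]
  rw [Fintype.sum_prod_type]
  refine Finset.sum_congr rfl fun i _ => ?_
  rw [Wop, Finset.mul_sum, Finset.sum_mul]
  refine Finset.sum_congr rfl fun δ _ => ?_
  show sProd u (Fin.cons i δ) * g * star (sProd u (Fin.cons i δ)) = _
  rw [sProd_cons, star_mul]
  simp only [mul_assoc]

lemma baseB (u : Fin p → A) (hu : ∀ i j, star (u i) * u j = if i = j then 1 else 0)
    (e0 e1 : Fin p) (he : e1 ≠ e0) (k l : ℕ) (hl1 : 1 ≤ l) (hlk : l ≤ k)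
    (g : A) (hg : g = wProd u (List.replicate (2*k) e0 ++ [e1]))
    (ν : List (Fin p)) (hν : ν.length = l) :
    star (Wop u g l) * star (wProd u ν) * Wop u g l = 0 := by
  rw [Wop, star_sum, Finset.sum_mul, Finset.sum_mul]
  refine Finset.sum_eq_zero fun δ _ => ?_
  rw [Finset.mul_sum]
  refine Finset.sum_eq_zero fun δ' _ => ?_
  have hsd : star (sProd u δ * g * star (sProd u δ))
      = sProd u δ * star g * star (sProd u δ) := by
    simp only [star_mul, star_star, mul_assoc]
  rw [hsd]
  -- h2 : middle collapse
  have h2 : star (sProd u δ) * star (wProd u ν) * sProd u δ'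
      = if List.ofFn δ' = ν then star (sProd u δ) else 0 := by
    rw [sProd_eq, sProd_eq, ← star_mul, ← wProd_append]
    rw [cancel_ge u hu _ _ (by simp [hν])]
    rw [List.length_ofFn]
    rw [List.take_left' hν, List.drop_left' hν, ← sProd_eq]
  have key : sProd u δ * star g * star (sProd u δ) * star (wProd u ν)
      * (sProd u δ' * g * star (sProd u δ'))
      = sProd u δ * star g * (star (sProd u δ) * star (wProd u ν) * sProd u δ')
        * g * star (sProd u δ') := by simp only [mul_assoc]
  rw [key, h2]
  by_cases hδ' : List.ofFn δ' = ν
  · rw [if_pos hδ']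
    -- h3 : star (sProd δ) * g
    have h3 : star (sProd u δ) * g
        = if List.ofFn δ = List.replicate l e0
          then wProd u (List.replicate (2*k - l) e0 ++ [e1]) else 0 := by
      rw [sProd_eq, hg]
      rw [cancel_le u hu _ _ (by simp only [List.length_append, List.length_replicate, List.length_cons, List.length_nil, List.length_ofFn]; omega)]
      rw [List.length_ofFn]
      rw [List.take_append_of_le_length (by simp only [List.length_append, List.length_replicate, List.length_cons, List.length_nil, List.length_ofFn]; omega),
          List.drop_append_of_le_length (by simp only [List.length_append, List.length_replicate, List.length_cons, List.length_nil, List.length_ofFn]; omega)]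
      rw [List.take_replicate, List.drop_replicate, min_eq_left (by omega)]
    have key2 : sProd u δ * star g * star (sProd u δ) * g * star (sProd u δ')
        = sProd u δ * star g * (star (sProd u δ) * g) * star (sProd u δ') := by
      simp only [mul_assoc]
    rw [key2, h3]
    by_cases hδ : List.ofFn δ = List.replicate l e0
    · rw [if_pos hδ]
      have h4 : star g * wProd u (List.replicate (2*k - l) e0 ++ [e1]) = 0 := by
        rw [hg, cancel_ge u hu _ _ (by simp only [List.length_append, List.length_replicate, List.length_cons, List.length_nil, List.length_ofFn]; omega)]
        rw [if_neg]
        intro hcontra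
        have hlen2 : (List.replicate (2*k - l) e0 ++ [e1]).length = 2*k - l + 1 := by simp
        rw [hlen2] at hcontra
        rw [List.take_append_of_le_length (by simp only [List.length_append, List.length_replicate, List.length_cons, List.length_nil, List.length_ofFn]; omega), List.take_replicate,
            min_eq_left (by omega)] at hcontra
        have : 2*k - l + 1 = (2*k - l) + 1 := rfl
        rw [this, List.replicate_succ'] at hcontra
        have := List.append_cancel_left hcontra
        simp at this
        exact he this
      have key3 : sProd u δ * star g * wProd u (List.replicate (2*k - l) e0 ++ [e1])
          * star (sProd u δ')
          = sProd u δ * (star g * wProd u (List.replicate (2*k - l) e0 ++ [e1]))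
            * star (sProd u δ') := by simp only [mul_assoc]
      rw [key3, h4, mul_zero, zero_mul]
    · rw [if_neg hδ, mul_zero, zero_mul]
  · rw [if_neg hδ', mul_zero, zero_mul, zero_mul]

end Stmt17Aux

namespace Stmt17Aux
variable {p : ℕ}

lemma sum_conj_sandwich (u : Fin p → A) (V X : A) :
    star (∑ i : Fin p, u i * V * star (u i)) * X * (∑ i : Fin p, u i * V * star (u i))
      = ∑ i : Fin p, ∑ i' : Fin p,
          u i * (star V * (star (u i) * X * u i') * V) * star (u i') := by
  rw [star_sum, Finset.sum_mul, Finset.sum_mul]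
  refine Finset.sum_congr rfl fun i _ => ?_
  rw [Finset.mul_sum]
  refine Finset.sum_congr rfl fun i' _ => ?_
  simp only [star_mul, star_star, mul_assoc]

lemma baseB' (u : Fin p → A) (hu : ∀ i j, star (u i) * u j = if i = j then 1 else 0)
    (e0 e1 : Fin p) (he : e1 ≠ e0) (k l : ℕ) (hl1 : 1 ≤ l) (hlk : l ≤ k)
    (g : A) (hg : g = wProd u (List.replicate (2*k) e0 ++ [e1]))
    (ν : List (Fin p)) (hν : ν.length = l) :
    star (Wop u g l) * wProd u ν * Wop u g l = 0 := by
  have h := baseB u hu e0 e1 he k l hl1 hlk g hg ν hν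
  have h2 := congrArg star h
  rw [star_zero] at h2
  calc star (Wop u g l) * wProd u ν * Wop u g l
      = star (star (Wop u g l) * star (wProd u ν) * Wop u g l) := by
        simp only [star_mul, star_star, mul_assoc]
    _ = 0 := h2

lemma Wop_isometry (u : Fin p → A) (hu : ∀ i j, star (u i) * u j = if i = j then 1 else 0)
    (hu1 : ∑ i : Fin p, u i * star (u i) = 1)
    (g : A) (hgi : star g * g = 1) : ∀ j, star (Wop u g j) * Wop u g j = 1 := by
  intro j
  induction j with
  | zero => rw [Wop_zero]; exact hgi
  | succ j ih =>
    rw [Wop_succ]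
    have h := sum_conj_sandwich u (Wop u g j) 1
    rw [mul_one] at h
    rw [h]
    have hterm : ∀ i i' : Fin p,
        u i * (star (Wop u g j) * (star (u i) * 1 * u i') * Wop u g j) * star (u i')
          = if i = i' then u i * star (u i) else 0 := by
      intro i i'
      rw [mul_one, hu]
      by_cases hii : i = i'
      · subst hii
        rw [if_pos rfl, if_pos rfl, mul_one, ih, mul_one]
      · simp [hii]
    calc (∑ i : Fin p, ∑ i' : Fin p,
            u i * (star (Wop u g j) * (star (u i) * 1 * u i') * Wop u g j) * star (u i'))
        = ∑ i : Fin p, ∑ i' : Fin p, if i = i' then u i * star (u i) else 0 := by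
          exact Finset.sum_congr rfl fun i _ => Finset.sum_congr rfl fun i' _ => hterm i i'
      _ = ∑ i : Fin p, u i * star (u i) := by
          refine Finset.sum_congr rfl fun i _ => ?_
          rw [Finset.sum_ite_eq]
          simp
      _ = 1 := hu1

end Stmt17Aux

namespace Stmt17Aux
variable {p : ℕ}

lemma conj_W (u : Fin p → A) (hu : ∀ i j, star (u i) * u j = if i = j then 1 else 0)
    (hu1 : ∑ i : Fin p, u i * star (u i) = 1)
    (e0 e1 : Fin p) (he : e1 ≠ e0) (k : ℕ) (hk : 1 ≤ k)
    (g : A) (hg : g = wProd u (List.replicate (2*k) e0 ++ [e1])) :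
    ∀ j, j ≤ k → ∀ μ₁ μ₂ : List (Fin p), μ₁.length ≤ j → μ₂.length ≤ j →
    star (Wop u g j) * (wProd u μ₁ * star (wProd u μ₂)) * Wop u g j =
      if μ₁.length = μ₂.length then wProd u μ₁ * star (wProd u μ₂) else 0 := by
  have hgi : star g * g = 1 := by rw [hg]; exact wProd_isometry u hu _
  intro j
  induction j with
  | zero =>
    intro _ μ₁ μ₂ h1 h2
    have e₁ : μ₁ = [] := List.eq_nil_of_length_eq_zero (by omega)
    have e₂ : μ₂ = [] := List.eq_nil_of_length_eq_zero (by omega)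
    subst e₁; subst e₂
    rw [Wop_zero]
    simp only [wProd_nil, star_one, mul_one, List.length_nil, if_pos rfl]
    exact hgi
  | succ j ih =>
    intro hjk μ₁ μ₂ h1 h2
    have hjk' : j ≤ k := by omega
    match μ₁, μ₂ with
    | [], [] =>
      simp only [wProd_nil, star_one, mul_one, List.length_nil, if_pos rfl]
      exact Wop_isometry u hu hu1 g hgi (j+1)
    | a :: μ₁', b :: μ₂' =>
      rw [Wop_succ, sum_conj_sandwich u (Wop u g j)]
      have hinner : ∀ i i' : Fin p,
          star (u i) * (wProd u (a :: μ₁') * star (wProd u (b :: μ₂'))) * u i'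
            = if b = i' then (if i = a then wProd u μ₁' * star (wProd u μ₂') else 0) else 0 := by
        intro i i'
        have step : star (u i) * (wProd u (a :: μ₁') * star (wProd u (b :: μ₂'))) * u i'
            = (star (u i) * u a) * ((wProd u μ₁' * star (wProd u μ₂')) * (star (u b) * u i')) := by
          simp only [wProd_cons, star_mul, mul_assoc]
        rw [step, hu, hu]
        by_cases hia : i = a <;> by_cases hbi : b = i' <;>
          simp [hia, hbi]
      calc (∑ i : Fin p, ∑ i' : Fin p, u i * (star (Wop u g j)
              * (star (u i) * (wProd u (a :: μ₁') * star (wProd u (b :: μ₂'))) * u i')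
              * Wop u g j) * star (u i'))
          = ∑ i : Fin p, ∑ i' : Fin p, if b = i' then (if i = a then
              u i * (star (Wop u g j) * (wProd u μ₁' * star (wProd u μ₂')) * Wop u g j)
                * star (u i') else 0) else 0 := by
            refine Finset.sum_congr rfl fun i _ => Finset.sum_congr rfl fun i' _ => ?_
            rw [hinner]
            by_cases hia : i = a <;> by_cases hbi : b = i' <;> simp [hia, hbi]
        _ = ∑ i : Fin p, if i = a then
              u i * (star (Wop u g j) * (wProd u μ₁' * star (wProd u μ₂')) * Wop u g j)
                * star (u b) else 0 := by
            refine Finset.sum_congr rfl fun i _ => ?_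
            rw [Finset.sum_ite_eq]
            simp
        _ = u a * (star (Wop u g j) * (wProd u μ₁' * star (wProd u μ₂')) * Wop u g j)
                * star (u b) := by
            rw [Finset.sum_ite_eq']
            simp
        _ = _ := by
            rw [ih hjk' μ₁' μ₂' (by simpa using h1) (by simpa using h2)]
            simp only [List.length_cons]
            by_cases hlen : μ₁'.length = μ₂'.length
            · rw [if_pos hlen, if_pos (by omega)]
              simp only [wProd_cons, star_mul, mul_assoc]
            · rw [if_neg hlen, if_neg (by omega)]
              simp
    | [], b :: μ₂' =>
      rw [if_neg (by simp)]
      by_cases hcase : (b :: μ₂').length ≤ j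
      · rw [Wop_succ, sum_conj_sandwich u (Wop u g j)]
        have hinner : ∀ i i' : Fin p,
            star (u i) * (wProd u ([] : List (Fin p)) * star (wProd u (b :: μ₂'))) * u i'
              = if b = i' then star (wProd u (μ₂' ++ [i])) else 0 := by
          intro i i'
          have e1 : wProd u (μ₂' ++ [i]) = wProd u μ₂' * u i := by
            rw [wProd_append]; simp
          have step : star (u i) * (wProd u ([] : List (Fin p)) * star (wProd u (b :: μ₂'))) * u i'
              = star (wProd u μ₂' * u i) * (star (u b) * u i') := by
            simp only [wProd_nil, one_mul, wProd_cons, star_mul, star_star, mul_assoc]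
          rw [step, hu, ← e1]
          by_cases hbi : b = i' <;> simp [hbi]
        have hzero : ∀ i : Fin p,
            star (Wop u g j) * star (wProd u (μ₂' ++ [i])) * Wop u g j = 0 := by
          intro i
          have h := ih hjk' [] (μ₂' ++ [i]) (by simp)
            (by simp only [List.length_append, List.length_cons, List.length_nil] at hcase ⊢; omega)
          rw [if_neg (by simp)] at h
          simpa using h
        calc (∑ i : Fin p, ∑ i' : Fin p, u i * (star (Wop u g j)
                * (star (u i) * (wProd u ([] : List (Fin p)) * star (wProd u (b :: μ₂'))) * u i')
                * Wop u g j) * star (u i'))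
            = ∑ i : Fin p, ∑ i' : Fin p, (0 : A) := by
              refine Finset.sum_congr rfl fun i _ => Finset.sum_congr rfl fun i' _ => ?_
              rw [hinner]
              by_cases hbi : b = i'
              · rw [if_pos hbi]
                have : star (Wop u g j) * star (wProd u (μ₂' ++ [i])) * Wop u g j = 0 :=
                  hzero i
                calc u i * (star (Wop u g j) * star (wProd u (μ₂' ++ [i])) * Wop u g j)
                      * star (u i')
                    = u i * (0 : A) * star (u i') := by rw [this]
                  _ = 0 := by simp
              · rw [if_neg hbi]; simp
          _ = 0 := by simp
      · have hlen : (b :: μ₂').length = j + 1 := by omega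
        have h := baseB u hu e0 e1 he k (j+1) (by omega) hjk g hg (b :: μ₂') hlen
        simpa using h
    | a :: μ₁', [] =>
      rw [if_neg (by simp)]
      by_cases hcase : (a :: μ₁').length ≤ j
      · rw [Wop_succ, sum_conj_sandwich u (Wop u g j)]
        have hinner : ∀ i i' : Fin p,
            star (u i) * (wProd u (a :: μ₁') * star (wProd u ([] : List (Fin p)))) * u i'
              = if i = a then wProd u (μ₁' ++ [i']) else 0 := by
          intro i i'
          have e1 : wProd u (μ₁' ++ [i']) = wProd u μ₁' * u i' := by
            rw [wProd_append]; simp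
          have step : star (u i) * (wProd u (a :: μ₁') * star (wProd u ([] : List (Fin p)))) * u i'
              = (star (u i) * u a) * (wProd u μ₁' * u i') := by
            simp only [wProd_nil, star_one, mul_one, wProd_cons, mul_assoc]
          rw [step, hu, ← e1]
          by_cases hia : i = a <;> simp [hia]
        have hzero : ∀ i' : Fin p,
            star (Wop u g j) * wProd u (μ₁' ++ [i']) * Wop u g j = 0 := by
          intro i'
          have h := ih hjk' (μ₁' ++ [i']) []
            (by simp only [List.length_append, List.length_cons, List.length_nil] at hcase ⊢; omega) (by simp)
          rw [if_neg (by simp)] at h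
          simpa using h
        calc (∑ i : Fin p, ∑ i' : Fin p, u i * (star (Wop u g j)
                * (star (u i) * (wProd u (a :: μ₁') * star (wProd u ([] : List (Fin p)))) * u i')
                * Wop u g j) * star (u i'))
            = ∑ i : Fin p, ∑ i' : Fin p, (0 : A) := by
              refine Finset.sum_congr rfl fun i _ => Finset.sum_congr rfl fun i' _ => ?_
              rw [hinner]
              by_cases hia : i = a
              · rw [if_pos hia]
                calc u i * (star (Wop u g j) * wProd u (μ₁' ++ [i']) * Wop u g j)
                      * star (u i')
                    = u i * (0 : A) * star (u i') := by rw [hzero i']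
                  _ = 0 := by simp
              · rw [if_neg hia]; simp
          _ = 0 := by simp
      · have hlen : (a :: μ₁').length = j + 1 := by omega
        have h := baseB' u hu e0 e1 he k (j+1) (by omega) hjk g hg (a :: μ₁') hlen
        simpa using h

end Stmt17Aux

namespace Stmt17Aux
variable {p : ℕ}

/-- `x` commutes with the family `u` with factor `c`. -/
def MCom (u : Fin p → A) (c : ℂ) (x : A) : Prop :=
  (∀ j, x * u j = c • (u j * x)) ∧ (∀ j, star (u j) * x = c • (x * star (u j)))

lemma MCom.one (u : Fin p → A) : MCom u 1 (1 : A) := by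
  constructor <;> intro j <;> simp

lemma MCom.mul {u : Fin p → A} {c d : ℂ} {x y : A} (hx : MCom u c x) (hy : MCom u d y) :
    MCom u (c * d) (x * y) := by
  constructor
  · intro j
    rw [mul_assoc, hy.1 j, mul_smul_comm, ← mul_assoc, hx.1 j, smul_mul_assoc, smul_smul,
      mul_comm d c, mul_assoc]
  · intro j
    rw [← mul_assoc, hx.2 j, smul_mul_assoc, mul_assoc, hy.2 j, mul_smul_comm, smul_smul,
      mul_assoc]

lemma MCom.star' {u : Fin p → A} {c : ℂ} {x : A} (hx : MCom u c x) :
    MCom u (starRingEnd ℂ c) (star x) := by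
  constructor
  · intro j
    have := congrArg star (hx.2 j)
    rw [star_mul, star_star, star_smul, star_mul, star_star] at this
    simpa using this
  · intro j
    have := congrArg star (hx.1 j)
    rw [star_mul, star_smul, star_mul] at this
    simpa using this

lemma MCom.sum {u : Fin p → A} {c : ℂ} {ι : Type*} (S : Finset ι) (f : ι → A)
    (hf : ∀ i ∈ S, MCom u c (f i)) : MCom u c (∑ i ∈ S, f i) := by
  constructor
  · intro j
    rw [Finset.sum_mul, Finset.mul_sum, Finset.smul_sum]
    exact Finset.sum_congr rfl fun i hi => (hf i hi).1 j
  · intro j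
    rw [Finset.sum_mul, Finset.mul_sum, Finset.smul_sum]
    exact Finset.sum_congr rfl fun i hi => (hf i hi).2 j

lemma MCom.wProd_left {u : Fin p → A} {c : ℂ} {x : A} (hx : MCom u c x) :
    ∀ μ : List (Fin p), x * wProd u μ = c ^ μ.length • (wProd u μ * x) := by
  intro μ
  induction μ with
  | nil => simp
  | cons a μ ih =>
    rw [wProd_cons, ← mul_assoc, hx.1 a, smul_mul_assoc, mul_assoc, ih, mul_smul_comm,
      smul_smul, List.length_cons, ← mul_assoc, pow_succ, mul_comm (c ^ μ.length) c]

lemma MCom.starWProd_left {u : Fin p → A} {c : ℂ} {x : A} (hx : MCom u c x) :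
    ∀ μ : List (Fin p), star (wProd u μ) * x = c ^ μ.length • (x * star (wProd u μ)) := by
  intro μ
  induction μ with
  | nil => simp
  | cons a μ ih =>
    rw [wProd_cons, star_mul, mul_assoc, hx.2 a, mul_smul_comm, ← mul_assoc, ih,
      smul_mul_assoc, smul_smul, List.length_cons, mul_assoc, pow_succ,
      mul_comm (c ^ μ.length) c]

lemma MCom.wProd_right {u : Fin p → A} {c : ℂ} {x : A} (hx : MCom u c x)
    (hc : c * starRingEnd ℂ c = 1) (μ : List (Fin p)) :
    wProd u μ * x = (starRingEnd ℂ c) ^ μ.length • (x * wProd u μ) := by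
  have h := hx.wProd_left μ
  have : (starRingEnd ℂ c) ^ μ.length • (x * wProd u μ)
      = (starRingEnd ℂ c) ^ μ.length • (c ^ μ.length • (wProd u μ * x)) := by rw [h]
  rw [this, smul_smul, ← mul_pow, mul_comm (starRingEnd ℂ c) c, hc, one_pow, one_smul]

lemma MCom.starWProd_right {u : Fin p → A} {c : ℂ} {x : A} (hx : MCom u c x)
    (hc : c * starRingEnd ℂ c = 1) (μ : List (Fin p)) :
    x * star (wProd u μ) = (starRingEnd ℂ c) ^ μ.length • (star (wProd u μ) * x) := by
  have h := hx.starWProd_left μ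
  have : (starRingEnd ℂ c) ^ μ.length • (star (wProd u μ) * x)
      = (starRingEnd ℂ c) ^ μ.length • (c ^ μ.length • (x * star (wProd u μ))) := by rw [h]
  rw [this, smul_smul, ← mul_pow, mul_comm (starRingEnd ℂ c) c, hc, one_pow, one_smul]

/-- Move `x` from the left of `wProd u α * star (wProd u β)` to the right. -/
lemma MCom.conj_pair {u : Fin p → A} {c : ℂ} {x : A} (hx : MCom u c x)
    (hc : c * starRingEnd ℂ c = 1) (α β : List (Fin p)) :
    x * (wProd u α * star (wProd u β)) =
      (c ^ α.length * (starRingEnd ℂ c) ^ β.length) •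
        ((wProd u α * star (wProd u β)) * x) := by
  rw [← mul_assoc, hx.wProd_left α, smul_mul_assoc, mul_assoc, hx.starWProd_right hc β,
    mul_smul_comm, smul_smul, ← mul_assoc]

/-- Move `x` from the right of `wProd u α * star (wProd u β)` to the left. -/
lemma MCom.pair_conj {u : Fin p → A} {c : ℂ} {x : A} (hx : MCom u c x)
    (hc : c * starRingEnd ℂ c = 1) (α β : List (Fin p)) :
    (wProd u α * star (wProd u β)) * x =
      ((starRingEnd ℂ c) ^ α.length * c ^ β.length) •
        (x * (wProd u α * star (wProd u β))) := by
  rw [mul_assoc, hx.starWProd_left β, mul_smul_comm, ← mul_assoc, hx.wProd_right hc α,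
    smul_mul_assoc, smul_smul, mul_assoc]
  congr 1
  ring

end Stmt17Aux

namespace Stmt17Aux
variable {p r : ℕ}

lemma MCom.wProd_gen {u : Fin p → A} {v : Fin r → A} {c : ℂ}
    (hgen : ∀ i, MCom u c (v i)) (μ : List (Fin r)) :
    MCom u (c ^ μ.length) (wProd v μ) := by
  induction μ with
  | nil => simpa using MCom.one u
  | cons a μ ih =>
    rw [wProd_cons, List.length_cons, pow_succ']
    exact (hgen a).mul ih

end Stmt17Aux


open Stmt17Aux

/-- the isometry `w_k := w_{k,2} w_{k,1}` satisfies
`w_k^* s_{μ₁}s_{μ₂}^* t_{ν₁}t_{ν₂}^* w_k = s_{μ₁}s_{μ₂}^* t_{ν₁}t_{ν₂}^*` when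
`|μ₁|=|μ₂|` and `|ν₁|=|ν₂|` (all lengths `≤ k`), and `= 0` otherwise. -/
theorem stmt17 {n m : ℕ} (hn : 2 ≤ n) (hm : 2 ≤ m) (q : ℂ) (hq : ‖q‖ = 1)
    (s : Fin n → A) (t : Fin m → A)
    (hs : ∀ i j, star (s i) * s j = if i = j then 1 else 0)
    (hs1 : ∑ i : Fin n, s i * star (s i) = 1)
    (ht : ∀ r l, star (t r) * t l = if r = l then 1 else 0)
    (ht1 : ∑ r : Fin m, t r * star (t r) = 1)
    (hst : ∀ j r, star (s j) * t r = q • (t r * star (s j)))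
    (hts : ∀ r j, t r * s j = q • (s j * t r))
    (k : ℕ) (hk : 1 ≤ k)
    (sγ : A) (hsγ : sγ = (s ⟨0, by omega⟩) ^ (2 * k) * s ⟨1, by omega⟩)
    (tγ : A) (htγ : tγ = (t ⟨0, by omega⟩) ^ (2 * k) * t ⟨1, by omega⟩)
    (w₁ : A) (hw₁ : w₁ = ∑ δ : Fin k → Fin n, sProd s δ * sγ * star (sProd s δ))
    (w₂ : A) (hw₂ : w₂ = ∑ lam : Fin k → Fin m, sProd t lam * tγ * star (sProd t lam))
    (w : A) (hw : w = w₂ * w₁) :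
    star w * w = 1 ∧
    (∀ (μ₁ μ₂ : List (Fin n)) (ν₁ ν₂ : List (Fin m)),
      μ₁.length ≤ k → μ₂.length ≤ k → ν₁.length ≤ k → ν₂.length ≤ k →
      ((μ₁.length = μ₂.length ∧ ν₁.length = ν₂.length →
        star w * (wProd s μ₁ * star (wProd s μ₂) * (wProd t ν₁ * star (wProd t ν₂))) * w
          = wProd s μ₁ * star (wProd s μ₂) * (wProd t ν₁ * star (wProd t ν₂))) ∧
       (¬(μ₁.length = μ₂.length ∧ ν₁.length = ν₂.length) →
        star w * (wProd s μ₁ * star (wProd s μ₂) * (wProd t ν₁ * star (wProd t ν₂))) * w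
          = 0))) := by

  -- basic scalar facts
  have hq1 : q * starRingEnd ℂ q = 1 := by
    rw [Complex.mul_conj']
    rw [hq]
    norm_num
  set cq := q ^ (2*k+1) with hcq
  have hc : cq * starRingEnd ℂ cq = 1 := by
    rw [hcq, map_pow, ← mul_pow, hq1, one_pow]
  have hccq : starRingEnd ℂ cq * starRingEnd ℂ (starRingEnd ℂ cq) = 1 := by
    rw [Complex.conj_conj, mul_comm]; exact hc
  -- words
  set e0s : Fin n := ⟨0, by omega⟩ with he0s
  set e1s : Fin n := ⟨1, by omega⟩ with he1s
  set e0t : Fin m := ⟨0, by omega⟩ with he0t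
  set e1t : Fin m := ⟨1, by omega⟩ with he1t
  have hes : e1s ≠ e0s := by simp [he0s, he1s, Fin.ext_iff]
  have het : e1t ≠ e0t := by simp [he0t, he1t, Fin.ext_iff]
  have hsg : sγ = wProd s (List.replicate (2*k) e0s ++ [e1s]) := by
    rw [hsγ, wProd_append, wProd_replicate]; simp
  have htg : tγ = wProd t (List.replicate (2*k) e0t ++ [e1t]) := by
    rw [htγ, wProd_append, wProd_replicate]; simp
  have hw₁' : w₁ = Wop s sγ k := hw₁
  have hw₂' : w₂ = Wop t tγ k := hw₂
  -- isometries
  have iso1 : star w₁ * w₁ = 1 := by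
    rw [hw₁']
    exact Wop_isometry s hs hs1 sγ (by rw [hsg]; exact wProd_isometry s hs _) k
  have iso2 : star w₂ * w₂ = 1 := by
    rw [hw₂']
    exact Wop_isometry t ht ht1 tγ (by rw [htg]; exact wProd_isometry t ht _) k
  have part1 : star w * w = 1 := by
    rw [hw, star_mul]
    calc star w₁ * star w₂ * (w₂ * w₁) = star w₁ * ((star w₂ * w₂) * w₁) := by
          simp only [mul_assoc]
      _ = 1 := by rw [iso2, one_mul, iso1]
  -- commutation instances
  have hts' : ∀ r, MCom s q (t r) := fun r => ⟨fun j => hts r j, fun j => hst j r⟩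
  have hst' : ∀ j, MCom t (starRingEnd ℂ q) (s j) := by
    intro j
    constructor
    · intro r
      rw [hts r j, smul_smul, mul_comm, hq1, one_smul]
    · intro r
      have h := congrArg star (hst j r)
      rw [star_mul, star_star, star_smul, star_mul, star_star] at h
      simpa using h
  have hMw2 : MCom s cq w₂ := by
    rw [hw₂]
    refine MCom.sum _ _ (fun lam _ => ?_)
    have h1 : MCom s (q ^ k) (sProd t lam) := by
      rw [sProd_eq]
      simpa using MCom.wProd_gen hts' (List.ofFn lam)
    have h2 : MCom s cq tγ := by
      rw [htg]
      have := MCom.wProd_gen hts' (List.replicate (2*k) e0t ++ [e1t])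
      simpa using this
    have h3 : MCom s (starRingEnd ℂ (q ^ k)) (star (sProd t lam)) := h1.star'
    have h := (h1.mul h2).mul h3
    have hsc : q ^ k * cq * starRingEnd ℂ (q ^ k) = cq := by
      rw [map_pow]
      have e : q ^ k * cq * (starRingEnd ℂ q) ^ k = cq * (q * starRingEnd ℂ q) ^ k := by
        rw [mul_pow]; ring
      rw [e, hq1, one_pow, mul_one]
    rwa [hsc] at h
  have hMw1 : MCom t (starRingEnd ℂ cq) w₁ := by
    rw [hw₁]
    refine MCom.sum _ _ (fun δ _ => ?_)
    have h1 : MCom t ((starRingEnd ℂ q) ^ k) (sProd s δ) := by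
      rw [sProd_eq]
      simpa using MCom.wProd_gen hst' (List.ofFn δ)
    have h2 : MCom t (starRingEnd ℂ cq) sγ := by
      rw [hsg]
      have h2' := MCom.wProd_gen hst' (List.replicate (2*k) e0s ++ [e1s])
      have hlen : (List.replicate (2*k) e0s ++ [e1s]).length = 2*k+1 := by simp
      rw [hlen] at h2'
      have : starRingEnd ℂ cq = (starRingEnd ℂ q) ^ (2*k+1) := by rw [hcq, map_pow]
      rwa [this]
    have h3 : MCom t (starRingEnd ℂ ((starRingEnd ℂ q) ^ k)) (star (sProd s δ)) := h1.star'
    have h := (h1.mul h2).mul h3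
    have hsc : (starRingEnd ℂ q) ^ k * starRingEnd ℂ cq
        * starRingEnd ℂ ((starRingEnd ℂ q) ^ k) = starRingEnd ℂ cq := by
      have e1 : starRingEnd ℂ ((starRingEnd ℂ q) ^ k) = q ^ k := by
        rw [map_pow, Complex.conj_conj]
      rw [e1]
      have e : (starRingEnd ℂ q) ^ k * starRingEnd ℂ cq * q ^ k
          = starRingEnd ℂ cq * (q * starRingEnd ℂ q) ^ k := by
        rw [mul_pow]; ring
      rw [e, hq1, one_pow, mul_one]
    rwa [hsc] at h
  have hMw2s : MCom s (starRingEnd ℂ cq) (star w₂) := hMw2.star'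
  -- main conjugation results
  have hconjS := conj_W s hs hs1 e0s e1s hes k hk sγ hsg k le_rfl
  have hconjT := conj_W t ht ht1 e0t e1t het k hk tγ htg k le_rfl
  refine ⟨part1, ?_⟩
  intro μ₁ μ₂ ν₁ ν₂ hμ₁ hμ₂ hν₁ hν₂
  set S := wProd s μ₁ * star (wProd s μ₂) with hS
  set T := wProd t ν₁ * star (wProd t ν₂) with hT
  have master : star w * (S * T) * w
      = if μ₁.length = μ₂.length ∧ ν₁.length = ν₂.length then S * T else 0 := by
    have hA : star w₂ * S = ((starRingEnd ℂ cq) ^ μ₁.length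
        * (starRingEnd ℂ (starRingEnd ℂ cq)) ^ μ₂.length) • (S * star w₂) :=
      hMw2s.conj_pair hccq μ₁ μ₂
    set d : ℂ := (starRingEnd ℂ cq) ^ μ₁.length
        * (starRingEnd ℂ (starRingEnd ℂ cq)) ^ μ₂.length with hd
    have hTconj : star w₂ * T * w₂ = if ν₁.length = ν₂.length then T else 0 := by
      rw [hw₂']
      exact hconjT ν₁ ν₂ hν₁ hν₂
    have hSconj : star w₁ * S * w₁ = if μ₁.length = μ₂.length then S else 0 := by
      rw [hw₁']
      exact hconjS μ₁ μ₂ hμ₁ hμ₂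
    have hE : star w * (S * T) * w = d • (star w₁ * (S * ((star w₂ * T * w₂) * w₁))) := by
      rw [hw, star_mul]
      calc star w₁ * star w₂ * (S * T) * (w₂ * w₁)
          = star w₁ * ((star w₂ * S) * (T * (w₂ * w₁))) := by simp only [mul_assoc]
        _ = star w₁ * ((d • (S * star w₂)) * (T * (w₂ * w₁))) := by rw [hA]
        _ = d • (star w₁ * (S * ((star w₂ * T * w₂) * w₁))) := by
            simp only [smul_mul_assoc, mul_smul_comm, mul_assoc]
    by_cases hν : ν₁.length = ν₂.length
    · rw [hE, hTconj, if_pos hν]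
      have hTw : T * w₁ = w₁ * T := by
        have h := hMw1.pair_conj hccq ν₁ ν₂
        rw [Complex.conj_conj, hν, ← mul_pow, hc, one_pow, one_smul] at h
        exact h
      calc d • (star w₁ * (S * (T * w₁))) = d • ((star w₁ * S * w₁) * T) := by
            rw [hTw]; simp only [mul_assoc]
        _ = if μ₁.length = μ₂.length ∧ ν₁.length = ν₂.length then S * T else 0 := by
            rw [hSconj]
            by_cases hμ : μ₁.length = μ₂.length
            · rw [if_pos hμ, if_pos ⟨hμ, hν⟩]
              have hd1 : d = 1 := by
                rw [hd, Complex.conj_conj, hμ, ← mul_pow, mul_comm (starRingEnd ℂ cq), hc,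
                  one_pow]
              rw [hd1, one_smul]
            · rw [if_neg hμ, if_neg (by tauto)]
              simp
    · rw [hE, hTconj, if_neg hν, if_neg (by tauto)]
      simp
  constructor
  · intro hcond
    rw [master, if_pos hcond]
  · intro hcond
    rw [master, if_neg hcond]
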